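/- For T ∈ {T_α, T_{δ−α}} and for the graded conjugation ‡, one has (T(x))^‡ = T(x^‡) for all x ∈ U; that is, T_α and T_{δ−α} commute with ‡. -/

import Mathlib

noncomputable section
open scoped BigOperators

/-- The base field `K = ℚ(q)`, the field of rational functions in `q` over `ℚ`. -/
abbrev KK : Type := RatFunc ℚ

/-- The deformation parameter `q`. -/
noncomputable def qq : KK := RatFunc.X

namespace QA

/-- Generators of the presented algebra: the invertible Cartan elements
`k_d^{±1}, k_α^{±1}, k_{δ−α}^{±1}` and the root vectors
`e_α, e_{−α}, e_{δ−α}, e_{−δ+α}`. -/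
inductive gen : Type
  | kd | kdi | ka | kai | kda | kdai | ea | eai | eda | edai

open gen

/-- The free algebra on the generators. -/
abbrev F : Type := FreeAlgebra KK gen

def X (g : gen) : F := FreeAlgebra.ι KK g

/-- The formal inverse of a `k`-generator. -/
def gen.kinv : gen → gen
  | kd => kdi | kdi => kd | ka => kai | kai => ka | kda => kdai | kdai => kda
  | g => g

/-- Whether a generator is among the Cartan generators `k_γ^{±1}`. -/
def gen.isK : gen → Prop
  | kd => True | kdi => True | ka => True | kai => True | kda => True | kdai => True
  | _ => False

/-- The pairing `(γ, ±β)` for `γ ∈ {d, α, δ−α}` and the root vector generator of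
weight `±β`, `β ∈ {α, δ−α}`; junk value `0` otherwise.  Recall
`(α,α) = 2`, `(α,δ) = 0`, `(δ,δ) = 0`, `(d,α) = 0`, `(d,δ) = 1`. -/
def pairKE : gen → gen → ℤ
  | kd, eda => 1 | kd, edai => -1
  | ka, ea => 2 | ka, eai => -2 | ka, eda => -2 | ka, edai => 2
  | kda, ea => -2 | kda, eai => 2 | kda, eda => 2 | kda, edai => -2
  | _, _ => 0

/-- The generic (super/q-)bracket `br s x y = x·y − s·(y·x)`.  For homogeneous `x, y` of
weights `β, β′` and parities `p, p′` one takes `s = (−1)^{pp′}` for `[·,·]`,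
`s = (−1)^{pp′} q^{(β,β′)}` for `[·,·]_q` and `s = (−1)^{pp′} q^{−(β,β′)}` for
`[·,·]_{q^{−1}}`. -/
def br {A : Type} [Ring A] [Algebra KK A] (s : KK) (x y : A) : A := x * y - s • (y * x)

/-- `(−1)^θ`. -/
def sgn (θ : ℕ) : KK := (-1) ^ θ
/-- The bracket prefactor `(−1)^θ q^{−2}`. -/
def sm2 (θ : ℕ) : KK := (-1) ^ θ * qq ^ (-2 : ℤ)
/-- The bracket prefactor `(−1)^θ q^{2}`. -/
def s2 (θ : ℕ) : KK := (-1) ^ θ * qq ^ (2 : ℤ)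

/-- The defining relations of `U = U_q(A_1^{(1)})` (θ=0) resp. `U_q(C(2)^{(2)})` (θ=1). -/
inductive rel (θ : ℕ) : F → F → Prop
  | kinv (g : gen) (hg : g.isK) : rel θ (X g * X g.kinv) 1
  | kcomm (g g' : gen) (hg : g.isK) (hg' : g'.isK) : rel θ (X g * X g') (X g' * X g)
  | weight (g b : gen) (hg : g = kd ∨ g = ka ∨ g = kda)
      (hb : b = ea ∨ b = eai ∨ b = eda ∨ b = edai) :
      rel θ (X g * X b * X g.kinv) ((qq ^ pairKE g b) • X b)
  | ee1 : rel θ (br (sgn θ) (X ea) (X eai)) ((qq - qq⁻¹)⁻¹ • (X ka - X kai))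
  | ee2 : rel θ (br (sgn θ) (X eda) (X edai)) ((qq - qq⁻¹)⁻¹ • (X kda - X kdai))
  | ee3 : rel θ (br (sgn θ) (X ea) (X edai)) 0
  | ee4 : rel θ (br (sgn θ) (X eai) (X eda)) 0
  | serre1p : rel θ (br (s2 θ) (X ea) (br 1 (X ea) (br (sm2 θ) (X ea) (X eda)))) 0
  | serre1m : rel θ (br (s2 θ) (X eai) (br 1 (X eai) (br (sm2 θ) (X eai) (X edai)))) 0
  | serre2p : rel θ (br (s2 θ) (br 1 (br (sm2 θ) (X ea) (X eda)) (X eda)) (X eda)) 0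
  | serre2m : rel θ (br (s2 θ) (br 1 (br (sm2 θ) (X eai) (X edai)) (X edai)) (X edai)) 0

/-- The quantum affine (super)algebra `U`. -/
abbrev U (θ : ℕ) : Type := RingQuot (rel θ)

def Kd (θ : ℕ) : U θ := RingQuot.mkAlgHom KK (rel θ) (X kd)
def Kdi (θ : ℕ) : U θ := RingQuot.mkAlgHom KK (rel θ) (X kdi)
def Ka (θ : ℕ) : U θ := RingQuot.mkAlgHom KK (rel θ) (X ka)
def Kai (θ : ℕ) : U θ := RingQuot.mkAlgHom KK (rel θ) (X kai)
def Kda (θ : ℕ) : U θ := RingQuot.mkAlgHom KK (rel θ) (X kda)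
def Kdai (θ : ℕ) : U θ := RingQuot.mkAlgHom KK (rel θ) (X kdai)
def Ea (θ : ℕ) : U θ := RingQuot.mkAlgHom KK (rel θ) (X ea)
def Eai (θ : ℕ) : U θ := RingQuot.mkAlgHom KK (rel θ) (X eai)
def Eda (θ : ℕ) : U θ := RingQuot.mkAlgHom KK (rel θ) (X eda)
def Edai (θ : ℕ) : U θ := RingQuot.mkAlgHom KK (rel θ) (X edai)

/-- The presentation of `U′` in which the Serre relations are replaced by the two
quintic relations (both sign choices). -/
inductive rel' (θ : ℕ) : F → F → Prop
  | kinv (g : gen) (hg : g.isK) : rel' θ (X g * X g.kinv) 1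
  | kcomm (g g' : gen) (hg : g.isK) (hg' : g'.isK) : rel' θ (X g * X g') (X g' * X g)
  | weight (g b : gen) (hg : g = kd ∨ g = ka ∨ g = kda)
      (hb : b = ea ∨ b = eai ∨ b = eda ∨ b = edai) :
      rel' θ (X g * X b * X g.kinv) ((qq ^ pairKE g b) • X b)
  | ee1 : rel' θ (br (sgn θ) (X ea) (X eai)) ((qq - qq⁻¹)⁻¹ • (X ka - X kai))
  | ee2 : rel' θ (br (sgn θ) (X eda) (X edai)) ((qq - qq⁻¹)⁻¹ • (X kda - X kdai))
  | ee3 : rel' θ (br (sgn θ) (X ea) (X edai)) 0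
  | ee4 : rel' θ (br (sgn θ) (X eai) (X eda)) 0
  | quint1p : rel' θ (br (s2 θ) (br 1 (X ea) (br (sm2 θ) (X ea) (X eda)))
      (br 1 (br 1 (X ea) (br (sm2 θ) (X ea) (X eda))) (br (sm2 θ) (X ea) (X eda)))) 0
  | quint1m : rel' θ (br (s2 θ) (br 1 (X eai) (br (sm2 θ) (X eai) (X edai)))
      (br 1 (br 1 (X eai) (br (sm2 θ) (X eai) (X edai))) (br (sm2 θ) (X eai) (X edai)))) 0
  | quint2p : rel' θ (br (s2 θ) (br 1 (X eda) (br (sm2 θ) (X eda) (X ea)))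
      (br 1 (br 1 (X eda) (br (sm2 θ) (X eda) (X ea))) (br (sm2 θ) (X eda) (X ea)))) 0
  | quint2m : rel' θ (br (s2 θ) (br 1 (X edai) (br (sm2 θ) (X edai) (X eai)))
      (br 1 (br 1 (X edai) (br (sm2 θ) (X edai) (X eai))) (br (sm2 θ) (X edai) (X eai)))) 0

/-- The algebra `U′` presented with the quintic relations in place of the Serre relations. -/
abbrev U' (θ : ℕ) : Type := RingQuot (rel' θ)

def Ea' (θ : ℕ) : U' θ := RingQuot.mkAlgHom KK (rel' θ) (X ea)
def Eai' (θ : ℕ) : U' θ := RingQuot.mkAlgHom KK (rel' θ) (X eai)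
def Eda' (θ : ℕ) : U' θ := RingQuot.mkAlgHom KK (rel' θ) (X eda)
def Edai' (θ : ℕ) : U' θ := RingQuot.mkAlgHom KK (rel' θ) (X edai)

/-- `a = [(α,α)]_q = q + q⁻¹`. -/
def aa : KK := qq + qq⁻¹

/-- `e_δ = [e_α, e_{δ−α}]_q`. -/
def eD (θ : ℕ) : U θ := br (sm2 θ) (Ea θ) (Eda θ)
/-- `e_{−δ} = [e_{−δ+α}, e_{−α}]_{q^{−1}}`. -/
def eDm (θ : ℕ) : U θ := br (s2 θ) (Edai θ) (Eai θ)
/-- `ẽ_δ = [e_{δ−α}, e_α]_q`. -/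
def eDt (θ : ℕ) : U θ := br (sm2 θ) (Eda θ) (Ea θ)
/-- `ẽ_{−δ} = [e_{−α}, e_{−δ+α}]_{q^{−1}}`. -/
def eDmt (θ : ℕ) : U θ := br (s2 θ) (Eai θ) (Edai θ)

/-- `e_{nδ+α}`. -/
def ePa (θ : ℕ) : ℕ → U θ
  | 0 => Ea θ
  | n+1 => aa⁻¹ • br 1 (ePa θ n) (eD θ)

/-- `e_{−nδ−α}`. -/
def eMa (θ : ℕ) : ℕ → U θ
  | 0 => Eai θ
  | n+1 => aa⁻¹ • br 1 (eDm θ) (eMa θ n)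

/-- `e_{(n+1)δ−α}`. -/
def ePb' (θ : ℕ) : ℕ → U θ
  | 0 => Eda θ
  | n+1 => aa⁻¹ • br 1 (eD θ) (ePb' θ n)

/-- `e_{nδ−α}` (for `n ≥ 1`). -/
def ePb (θ : ℕ) (n : ℕ) : U θ := ePb' θ (n - 1)

/-- `e_{−(n+1)δ+α}`. -/
def eMb' (θ : ℕ) : ℕ → U θ
  | 0 => Edai θ
  | n+1 => aa⁻¹ • br 1 (eMb' θ n) (eDm θ)

/-- `e_{−nδ+α}` (for `n ≥ 1`). -/
def eMb (θ : ℕ) (n : ℕ) : U θ := eMb' θ (n - 1)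

/-- `e′_{nδ} = [e_α, e_{nδ−α}]_q` (for `n ≥ 1`). -/
def e'P (θ : ℕ) (n : ℕ) : U θ := br (sm2 θ) (Ea θ) (ePb θ n)
/-- `e′_{−nδ} = [e_{−nδ+α}, e_{−α}]_{q^{−1}}` (for `n ≥ 1`). -/
def e'M (θ : ℕ) (n : ℕ) : U θ := br (s2 θ) (eMb θ n) (Eai θ)

/-- `k_δ = k_α k_{δ−α}`. -/
def kD (θ : ℕ) : U θ := Ka θ * Kda θ
/-- `k_δ^{−1}`. -/
def kDi (θ : ℕ) : U θ := Kai θ * Kdai θ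

/-- `q_α = (−1)^θ q²`. -/
def qα (θ : ℕ) : KK := (-1) ^ θ * qq ^ 2

/-- `a(m) = (q^{2m} − q^{−2m})/(m(q − q^{−1}))`. -/
def aK (m : ℕ) : KK := (qq ^ (2 * m) - qq ^ (-(2 * (m : ℤ)))) / ((m : KK) * (qq - qq⁻¹))

/-- Tuples `(p_1, …, p_n)` of nonnegative integers with `p_1 + 2p_2 + ⋯ + n p_n = n`. -/
def tuples (n : ℕ) : Finset (Fin n → ℕ) :=
  (Fintype.piFinset fun _ : Fin n => Finset.range (n + 1)).filter
    (fun p => ∑ i : Fin n, (i.val + 1) * p i = n)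

/-- The new imaginary root vector `e_{nδ}` (for `n ≥ 1`), given by the inverse Schur
formula in terms of the `e′_{mδ}`. -/
def newE (θ : ℕ) (n : ℕ) : U θ :=
  ∑ p ∈ tuples n,
    (((((∑ i : Fin n, p i) - 1).factorial : KK) / ∏ i : Fin n, ((p i).factorial : KK)) *
        ((-1 : KK) ^ θ * (qq⁻¹ - qq)) ^ ((∑ i : Fin n, p i) - 1)) •
      ((List.finRange n).map (fun i => e'P θ (i.val + 1) ^ p i)).prod

/-- The new imaginary root vector `e_{−nδ}` (for `n ≥ 1`). -/
def newEm (θ : ℕ) (n : ℕ) : U θ :=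
  ∑ p ∈ tuples n,
    (((((∑ i : Fin n, p i) - 1).factorial : KK) / ∏ i : Fin n, ((p i).factorial : KK)) *
        ((-1 : KK) ^ θ * (qq - qq⁻¹)) ^ ((∑ i : Fin n, p i) - 1)) •
      ((List.finRange n).map (fun i => e'M θ (i.val + 1) ^ p i)).prod

/-- Defining conditions on the generators for the Lusztig automorphism `T_α`. -/
def TCa (θ : ℕ) (T : U θ →ₐ[KK] U θ) : Prop :=
  T (Kd θ) = Kd θ ∧ T (Kdi θ) = Kdi θ ∧ T (Ka θ) = Kai θ ∧ T (Kai θ) = Ka θ ∧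
  T (Kda θ) = Kda θ * (Ka θ) ^ 2 ∧ T (Kdai θ) = Kdai θ * (Kai θ) ^ 2 ∧
  T (Ea θ) = -(Eai θ * Ka θ) ∧ T (Eai θ) = -(sgn θ • (Kai θ * Ea θ)) ∧
  T (Eda θ) = aa⁻¹ • br 1 (Ea θ) (br (sm2 θ) (Ea θ) (Eda θ)) ∧
  T (Edai θ) = (sgn θ * aa⁻¹) • br 1 (br (s2 θ) (Edai θ) (Eai θ)) (Eai θ)

/-- Defining conditions on the generators for `T_α^{−1}`. -/
def TCai (θ : ℕ) (T : U θ →ₐ[KK] U θ) : Prop :=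
  T (Kd θ) = Kd θ ∧ T (Kdi θ) = Kdi θ ∧ T (Ka θ) = Kai θ ∧ T (Kai θ) = Ka θ ∧
  T (Kda θ) = Kda θ * (Ka θ) ^ 2 ∧ T (Kdai θ) = Kdai θ * (Kai θ) ^ 2 ∧
  T (Ea θ) = -(sgn θ • (Kai θ * Eai θ)) ∧ T (Eai θ) = -(Ea θ * Ka θ) ∧
  T (Eda θ) = aa⁻¹ • br 1 (br (sm2 θ) (Eda θ) (Ea θ)) (Ea θ) ∧
  T (Edai θ) = (sgn θ * aa⁻¹) • br 1 (Eai θ) (br (s2 θ) (Eai θ) (Edai θ))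

/-- Defining conditions on the generators for the Lusztig automorphism `T_{δ−α}`. -/
def TCd (θ : ℕ) (T : U θ →ₐ[KK] U θ) : Prop :=
  T (Kd θ) = Kd θ * Kdai θ ∧ T (Kdi θ) = Kdi θ * Kda θ ∧
  T (Ka θ) = Ka θ * (Kda θ) ^ 2 ∧ T (Kai θ) = Kai θ * (Kdai θ) ^ 2 ∧
  T (Kda θ) = Kdai θ ∧ T (Kdai θ) = Kda θ ∧
  T (Eda θ) = -(Edai θ * Kda θ) ∧ T (Edai θ) = -(sgn θ • (Kdai θ * Eda θ)) ∧
  T (Ea θ) = aa⁻¹ • br 1 (Eda θ) (br (sm2 θ) (Eda θ) (Ea θ)) ∧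
  T (Eai θ) = (sgn θ * aa⁻¹) • br 1 (br (s2 θ) (Eai θ) (Edai θ)) (Edai θ)

/-- Defining conditions on the generators for `T_{δ−α}^{−1}`. -/
def TCdi (θ : ℕ) (T : U θ →ₐ[KK] U θ) : Prop :=
  T (Kd θ) = Kd θ * Kdai θ ∧ T (Kdi θ) = Kdi θ * Kda θ ∧
  T (Ka θ) = Ka θ * (Kda θ) ^ 2 ∧ T (Kai θ) = Kai θ * (Kdai θ) ^ 2 ∧
  T (Kda θ) = Kdai θ ∧ T (Kdai θ) = Kda θ ∧
  T (Eda θ) = -(sgn θ • (Kdai θ * Edai θ)) ∧ T (Edai θ) = -(Eda θ * Kda θ) ∧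
  T (Ea θ) = aa⁻¹ • br 1 (br (sm2 θ) (Ea θ) (Eda θ)) (Eda θ) ∧
  T (Eai θ) = (sgn θ * aa⁻¹) • br 1 (Edai θ) (br (s2 θ) (Edai θ) (Eai θ))

/-- Defining conditions on the generators for the Dynkin involution `τ`. -/
def TCtau (θ : ℕ) (T : U θ →ₐ[KK] U θ) : Prop :=
  T (Kd θ) = Kd θ ∧ T (Kdi θ) = Kdi θ ∧ T (Ka θ) = Kda θ ∧ T (Kai θ) = Kdai θ ∧
  T (Kda θ) = Ka θ ∧ T (Kdai θ) = Kai θ ∧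
  T (Ea θ) = Eda θ ∧ T (Eai θ) = Edai θ ∧ T (Eda θ) = Ea θ ∧ T (Edai θ) = Eai θ

/-- Defining conditions for the parity automorphism `P` of `U`, used to express
parity-homogeneity: an element `x` is parity-homogeneous of parity `p` iff
`P x = (−1)^p • x`. -/
def PC (θ : ℕ) (P : U θ →ₐ[KK] U θ) : Prop :=
  P (Kd θ) = Kd θ ∧ P (Kdi θ) = Kdi θ ∧ P (Ka θ) = Ka θ ∧ P (Kai θ) = Kai θ ∧
  P (Kda θ) = Kda θ ∧ P (Kdai θ) = Kdai θ ∧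
  P (Ea θ) = sgn θ • Ea θ ∧ P (Eai θ) = sgn θ • Eai θ ∧
  P (Eda θ) = sgn θ • Eda θ ∧ P (Edai θ) = sgn θ • Edai θ

/-- The conditions on the graded conjugation `‡`: a bijective additive map, semilinear over
the automorphism `σ : q ↦ q^{−1}` of `K`, graded-antimultiplicative (with respect to
parity-homogeneity expressed through the parity automorphism `P`), with the prescribed
values on the generators. -/
def DagC (θ : ℕ) (σ : KK ≃+* KK) (P : U θ →ₐ[KK] U θ) (dag : U θ → U θ) : Prop :=
  Function.Bijective dag ∧
  (∀ x y : U θ, dag (x + y) = dag x + dag y) ∧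
  (∀ (c : KK) (x : U θ), dag (c • x) = σ c • dag x) ∧
  (∀ (p p' : ℕ) (x y : U θ), P x = ((-1 : KK) ^ p) • x → P y = ((-1 : KK) ^ p') • y →
      dag (x * y) = ((-1 : KK) ^ (p * p')) • (dag y * dag x)) ∧
  dag (Kd θ) = Kdi θ ∧ dag (Kdi θ) = Kd θ ∧ dag (Ka θ) = Kai θ ∧ dag (Kai θ) = Ka θ ∧
  dag (Kda θ) = Kdai θ ∧ dag (Kdai θ) = Kda θ ∧
  dag (Ea θ) = sgn θ • Eai θ ∧ dag (Eda θ) = sgn θ • Edai θ ∧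
  dag (Eai θ) = Ea θ ∧ dag (Edai θ) = Eda θ

/-- The conditions on the Chevalley graded involution `ω`: a bijective additive
multiplicative map, semilinear over the automorphism `σ : q ↦ q^{−1}` of `K`, with the
prescribed values on the generators. -/
def OmC (θ : ℕ) (σ : KK ≃+* KK) (ω : U θ → U θ) : Prop :=
  Function.Bijective ω ∧
  (∀ x y : U θ, ω (x + y) = ω x + ω y) ∧
  (∀ (c : KK) (x : U θ), ω (c • x) = σ c • ω x) ∧
  (∀ x y : U θ, ω (x * y) = ω x * ω y) ∧
  ω (Kd θ) = Kd θ ∧ ω (Kdi θ) = Kdi θ ∧ ω (Ka θ) = Ka θ ∧ ω (Kai θ) = Kai θ ∧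
  ω (Kda θ) = Kda θ ∧ ω (Kdai θ) = Kdai θ ∧
  ω (Ea θ) = -Eai θ ∧ ω (Eda θ) = -Edai θ ∧
  ω (Eai θ) = -(sgn θ • Ea θ) ∧ ω (Edai θ) = -(sgn θ • Eda θ)

end QA

namespace QA

lemma br_smul_left' {A : Type} [Ring A] [Algebra KK A] (s c : KK) (x y : A) :
    br s (c • x) y = c • br s x y := by
  simp only [br, smul_mul_assoc, mul_smul_comm, smul_sub, smul_smul, mul_comm s c]

lemma br_smul_right' {A : Type} [Ring A] [Algebra KK A] (s c : KK) (x y : A) :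
    br s x (c • y) = c • br s x y := by
  simp only [br, smul_mul_assoc, mul_smul_comm, smul_sub, smul_smul, mul_comm s c]

lemma map_br' {θ : ℕ} (f : U θ →ₐ[KK] U θ) (s : KK) (x y : U θ) :
    f (br s x y) = br s (f x) (f y) := by
  simp only [br, map_sub, map_mul, map_smul]

lemma Uind {θ : ℕ} {p : U θ → Prop}
    (halg : ∀ r : KK, p (algebraMap KK (U θ) r))
    (hgen : ∀ g : gen, p (RingQuot.mkAlgHom KK (rel θ) (X g)))
    (hmul : ∀ x y, p x → p y → p (x * y))
    (hadd : ∀ x y, p x → p y → p (x + y)) : ∀ x, p x := by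
  intro x
  obtain ⟨y, rfl⟩ := RingQuot.mkAlgHom_surjective KK (rel θ) x
  induction y using FreeAlgebra.induction with
  | grade0 r => rw [AlgHom.commutes]; exact halg r
  | grade1 g => exact hgen g
  | mul a b ha hb => rw [map_mul]; exact hmul _ _ ha hb
  | add a b ha hb => rw [map_add]; exact hadd _ _ ha hb

lemma Kcomm {θ : ℕ} (g g' : gen) (hg : g.isK) (hg' : g'.isK) :
    Commute (RingQuot.mkAlgHom KK (rel θ) (X g)) (RingQuot.mkAlgHom KK (rel θ) (X g')) := by
  have h := RingQuot.mkAlgHom_rel KK (rel.kcomm (θ := θ) g g' hg hg')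
  simp only [map_mul] at h
  exact h

lemma KaKai {θ : ℕ} : Ka θ * Kai θ = 1 := by
  have h := RingQuot.mkAlgHom_rel KK (rel.kinv (θ := θ) gen.ka trivial)
  simp only [map_mul, map_one] at h
  exact h

lemma Hprod_general {A : Type} [Ring A] [Algebra KK A] (σ : KK ≃+* KK)
    (P T : A →ₐ[KK] A) (dag : A → A)
    (PP : ∀ z, P (P z) = z)
    (hPT : ∀ z, P (T z) = T (P z))
    (dadd : ∀ x y, dag (x + y) = dag x + dag y)
    (dsmul : ∀ (c : KK) (x : A), dag (c • x) = σ c • dag x)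
    (dmul : ∀ (p p' : ℕ) (x y : A), P x = ((-1 : KK) ^ p) • x → P y = ((-1 : KK) ^ p') • y →
      dag (x * y) = ((-1 : KK) ^ (p * p')) • (dag y * dag x))
    (x y : A)
    (hdx : dag (T x) = T (dag x)) (hdpx : dag (T (P x)) = T (dag (P x)))
    (hdy : dag (T y) = T (dag y)) (hdpy : dag (T (P y)) = T (dag (P y))) :
    dag (T (x * y)) = T (dag (x * y)) ∧ dag (T (P x * P y)) = T (dag (P x * P y)) := by
  have dzero : dag 0 = 0 := by simpa using dsmul 0 0
  have dneg : ∀ z : A, dag (-z) = -dag z := by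
    intro z
    have h : dag z + dag (-z) = 0 := by rw [← dadd, add_neg_cancel, dzero]
    exact eq_neg_of_add_eq_zero_right h
  have dsub : ∀ z w : A, dag (z - w) = dag z - dag w := by
    intro z w; rw [sub_eq_add_neg, dadd, dneg, sub_eq_add_neg]
  have Hadd : ∀ z w : A, dag (T z) = T (dag z) → dag (T w) = T (dag w) →
      dag (T (z + w)) = T (dag (z + w)) := by
    intro z w hz hw; rw [map_add, dadd, hz, hw, dadd, map_add]
  have Hsub : ∀ z w : A, dag (T z) = T (dag z) → dag (T w) = T (dag w) →
      dag (T (z - w)) = T (dag (z - w)) := by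
    intro z w hz hw; rw [map_sub, dsub, hz, hw, dsub, map_sub]
  have Hsmul : ∀ (c : KK) (z : A), dag (T z) = T (dag z) →
      dag (T (c • z)) = T (dag (c • z)) := by
    intro c z hz; rw [map_smul, dsmul, hz, dsmul, map_smul]
  have Hmul : ∀ (p p' : ℕ) (z w : A),
      P z = ((-1 : KK) ^ p) • z → P w = ((-1 : KK) ^ p') • w →
      dag (T z) = T (dag z) → dag (T w) = T (dag w) →
      dag (T (z * w)) = T (dag (z * w)) := by
    intro p p' z w hz hw hdz hdw
    have hTz : P (T z) = ((-1 : KK) ^ p) • T z := by rw [hPT, hz, map_smul]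
    have hTw : P (T w) = ((-1 : KK) ^ p') • T w := by rw [hPT, hw, map_smul]
    rw [map_mul, dmul p p' (T z) (T w) hTz hTw, hdz, hdw, dmul p p' z w hz hw, map_smul, map_mul]
  have h2 : (2 : KK) ≠ 0 := by
    intro h
    have h2' : algebraMap ℚ KK 2 = algebraMap ℚ KK 0 := by rw [map_ofNat, map_zero, h]
    have h3 := (algebraMap ℚ KK).injective h2'
    norm_num at h3
  have half : (2⁻¹ : KK) * 2 = 1 := inv_mul_cancel₀ h2
  set xe := (2⁻¹ : KK) • (x + P x) with hxe_def
  set xo := (2⁻¹ : KK) • (x - P x) with hxo_def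
  set ye := (2⁻¹ : KK) • (y + P y) with hye_def
  set yo := (2⁻¹ : KK) • (y - P y) with hyo_def
  have pxe : P xe = ((-1 : KK) ^ 0) • xe := by
    rw [pow_zero, one_smul, hxe_def, map_smul, map_add, PP, add_comm]
  have pxo : P xo = ((-1 : KK) ^ 1) • xo := by
    rw [hxo_def, map_smul, map_sub, PP, pow_one, neg_one_smul, ← smul_neg, neg_sub]
  have pye : P ye = ((-1 : KK) ^ 0) • ye := by
    rw [pow_zero, one_smul, hye_def, map_smul, map_add, PP, add_comm]
  have pyo : P yo = ((-1 : KK) ^ 1) • yo := by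
    rw [hyo_def, map_smul, map_sub, PP, pow_one, neg_one_smul, ← smul_neg, neg_sub]
  have hxsum : x = xe + xo := by
    rw [hxe_def, hxo_def, ← smul_add,
      show x + P x + (x - P x) = (2 : KK) • x from by rw [two_smul]; abel, smul_smul, half,
      one_smul]
  have hpxsum : P x = xe - xo := by
    rw [hxe_def, hxo_def, ← smul_sub,
      show x + P x - (x - P x) = (2 : KK) • P x from by rw [two_smul]; abel, smul_smul, half,
      one_smul]
  have hysum : y = ye + yo := by
    rw [hye_def, hyo_def, ← smul_add,
      show y + P y + (y - P y) = (2 : KK) • y from by rw [two_smul]; abel, smul_smul, half,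
      one_smul]
  have hpysum : P y = ye - yo := by
    rw [hye_def, hyo_def, ← smul_sub,
      show y + P y - (y - P y) = (2 : KK) • P y from by rw [two_smul]; abel, smul_smul, half,
      one_smul]
  have dxe : dag (T xe) = T (dag xe) := by
    rw [hxe_def]; exact Hsmul _ _ (Hadd _ _ hdx hdpx)
  have dxo : dag (T xo) = T (dag xo) := by
    rw [hxo_def]; exact Hsmul _ _ (Hsub _ _ hdx hdpx)
  have dye : dag (T ye) = T (dag ye) := by
    rw [hye_def]; exact Hsmul _ _ (Hadd _ _ hdy hdpy)
  have dyo : dag (T yo) = T (dag yo) := by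
    rw [hyo_def]; exact Hsmul _ _ (Hsub _ _ hdy hdpy)
  have m00 := Hmul 0 0 xe ye pxe pye dxe dye
  have m01 := Hmul 0 1 xe yo pxe pyo dxe dyo
  have m10 := Hmul 1 0 xo ye pxo pye dxo dye
  have m11 := Hmul 1 1 xo yo pxo pyo dxo dyo
  constructor
  · rw [hxsum, hysum, add_mul, mul_add, mul_add]
    exact Hadd _ _ (Hadd _ _ m00 m01) (Hadd _ _ m10 m11)
  · rw [hpxsum, hpysum, sub_mul, mul_sub, mul_sub]
    exact Hsub _ _ (Hsub _ _ m00 m01) (Hsub _ _ m10 m11)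

end QA

set_option maxHeartbeats 1000000 in
open QA in
/-- `T_α` and `T_{δ−α}` commute with the graded conjugation `‡`. -/
theorem stmt6 (θ : ℕ) (hθ : θ = 0 ∨ θ = 1)
    (σ : KK ≃+* KK) (hσ : σ qq = qq⁻¹)
    (P : U θ →ₐ[KK] U θ) (hP : PC θ P)
    (dag : U θ → U θ) (hdag : DagC θ σ P dag)
    (Ta Td : U θ →ₐ[KK] U θ) (hTa : TCa θ Ta) (hTd : TCd θ Td) :
    ∀ x : U θ, dag (Ta x) = Ta (dag x) ∧ dag (Td x) = Td (dag x) := by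
  obtain ⟨-, dadd, dsmul, dmul, dKd, dKdi, dKa, dKai, dKda, dKdai, dEa, dEda, dEai, dEdai⟩ := hdag
  obtain ⟨pKd, pKdi, pKa, pKai, pKda, pKdai, pEa, pEai, pEda, pEdai⟩ := hP
  obtain ⟨taKd, taKdi, taKa, taKai, taKda, taKdai, taEa, taEai, taEda, taEdai⟩ := hTa
  obtain ⟨tdKd, tdKdi, tdKa, tdKai, tdKda, tdKdai, tdEda, tdEdai, tdEa, tdEai⟩ := hTd
  have smul_eq : ∀ (c d : KK) (W : U θ), c = d → c • W = d • W := fun _ _ _ h => by rw [h]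
  -- scalar facts
  have hsgn2 : sgn θ * sgn θ = 1 := by
    rw [show sgn θ = (-1 : KK) ^ θ from rfl, ← pow_add, ← two_mul, pow_mul]
    norm_num
  have hσqi : σ qq⁻¹ = qq := by rw [map_inv₀, hσ, inv_inv]
  have hσsgn : σ (sgn θ) = sgn θ := by
    rw [show sgn θ = (-1 : KK) ^ θ from rfl, map_pow, map_neg, map_one]
  have hσz : ∀ n : ℤ, σ (qq ^ n) = qq ^ (-n) := by
    intro n; rw [map_zpow₀, hσ, inv_zpow, ← zpow_neg]
  have hσsm2 : σ (sm2 θ) = s2 θ := by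
    rw [sm2, s2, map_mul, map_pow, map_neg, map_one, hσz]; norm_num
  have hσs2 : σ (s2 θ) = sm2 θ := by
    rw [sm2, s2, map_mul, map_pow, map_neg, map_one, hσz]
  have hσaa : σ aa = aa := by rw [aa, map_add, hσ, hσqi, add_comm]
  have hσaai : σ aa⁻¹ = aa⁻¹ := by rw [map_inv₀, hσaa]
  have hθθ : ((-1 : KK)) ^ (θ * θ) = sgn θ := by
    rcases hθ with rfl | rfl <;> simp [sgn]
  -- dag basics
  have dzero : dag 0 = 0 := by simpa using dsmul 0 0
  have dneg : ∀ x : U θ, dag (-x) = -dag x := by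
    intro x
    have h : dag x + dag (-x) = 0 := by rw [← dadd, add_neg_cancel, dzero]
    exact eq_neg_of_add_eq_zero_right h
  have dsub : ∀ x y : U θ, dag (x - y) = dag x - dag y := by
    intro x y; rw [sub_eq_add_neg, dadd, dneg, sub_eq_add_neg]
  -- parity-specialized anti-multiplicativity
  have P00 : ∀ x y : U θ, P x = x → P y = y → dag (x * y) = dag y * dag x := by
    intro x y hx hy
    have h := dmul 0 0 x y (by simpa using hx) (by simpa using hy)
    simpa using h
  have Pt0 : ∀ x y : U θ, P x = sgn θ • x → P y = y → dag (x * y) = dag y * dag x := by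
    intro x y hx hy
    have h := dmul θ 0 x y (by simpa [sgn] using hx) (by simpa using hy)
    simpa using h
  have P0t : ∀ x y : U θ, P x = x → P y = sgn θ • y → dag (x * y) = dag y * dag x := by
    intro x y hx hy
    have h := dmul 0 θ x y (by simpa using hx) (by simpa [sgn] using hy)
    simpa using h
  have Ptt : ∀ x y : U θ, P x = sgn θ • x → P y = sgn θ • y →
      dag (x * y) = sgn θ • (dag y * dag x) := by
    intro x y hx hy
    have h := dmul θ θ x y (by simpa [sgn] using hx) (by simpa [sgn] using hy)
    rwa [hθθ] at h
  -- dag of brackets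
  have dbr_tt : ∀ (s : KK) (x y : U θ), P x = sgn θ • x → P y = sgn θ • y →
      dag (br s x y) = sgn θ • br (σ s) (dag y) (dag x) := by
    intro s x y hx hy
    rw [br, dsub, dsmul, Ptt x y hx hy, Ptt y x hy hx, br, smul_sub, smul_smul, smul_smul,
      mul_comm (σ s) (sgn θ)]
  have dbr_t0 : ∀ (s : KK) (x y : U θ), P x = sgn θ • x → P y = y →
      dag (br s x y) = br (σ s) (dag y) (dag x) := by
    intro s x y hx hy
    rw [br, dsub, dsmul, Pt0 x y hx hy, P0t y x hy hx, br]
  have dbr_0t : ∀ (s : KK) (x y : U θ), P x = x → P y = sgn θ • y →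
      dag (br s x y) = br (σ s) (dag y) (dag x) := by
    intro s x y hx hy
    rw [br, dsub, dsmul, P0t x y hx hy, Pt0 y x hy hx, br]
  -- parity of brackets and powers
  have Pbr : ∀ (s : KK) (x y : U θ), P x = sgn θ • x → P y = sgn θ • y →
      P (br s x y) = br s x y := by
    intro s x y hx hy
    rw [map_br', hx, hy, br_smul_left', br_smul_right', smul_smul, hsgn2, one_smul]
  have pKa2 : P (Ka θ ^ 2) = Ka θ ^ 2 := by rw [map_pow, pKa]
  have pKai2 : P (Kai θ ^ 2) = Kai θ ^ 2 := by rw [map_pow, pKai]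
  have pKda2 : P (Kda θ ^ 2) = Kda θ ^ 2 := by rw [map_pow, pKda]
  have pKdai2 : P (Kdai θ ^ 2) = Kdai θ ^ 2 := by rw [map_pow, pKdai]
  have dsq : ∀ x y : U θ, P x = x → dag x = y → dag (x ^ 2) = y ^ 2 := by
    intro x y hx hxy; rw [pow_two, P00 x x hx hx, hxy, ← pow_two]
  have d1 : dag 1 = 1 := by
    rw [← KaKai (θ := θ), P00 _ _ pKa pKai, dKa, dKai, KaKai]
  have dalg : ∀ r : KK, dag (algebraMap KK (U θ) r) = algebraMap KK (U θ) (σ r) := by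
    intro r
    rw [Algebra.algebraMap_eq_smul_one, Algebra.algebraMap_eq_smul_one, dsmul, d1]
  -- P is an involution
  have PP : ∀ x : U θ, P (P x) = x := by
    apply Uind
    · intro r; rw [AlgHom.commutes, AlgHom.commutes]
    · intro g
      cases g
      · show P (P (Kd θ)) = Kd θ; rw [pKd, pKd]
      · show P (P (Kdi θ)) = Kdi θ; rw [pKdi, pKdi]
      · show P (P (Ka θ)) = Ka θ; rw [pKa, pKa]
      · show P (P (Kai θ)) = Kai θ; rw [pKai, pKai]
      · show P (P (Kda θ)) = Kda θ; rw [pKda, pKda]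
      · show P (P (Kdai θ)) = Kdai θ; rw [pKdai, pKdai]
      · show P (P (Ea θ)) = Ea θ; rw [pEa, map_smul, pEa, smul_smul, hsgn2, one_smul]
      · show P (P (Eai θ)) = Eai θ; rw [pEai, map_smul, pEai, smul_smul, hsgn2, one_smul]
      · show P (P (Eda θ)) = Eda θ; rw [pEda, map_smul, pEda, smul_smul, hsgn2, one_smul]
      · show P (P (Edai θ)) = Edai θ; rw [pEdai, map_smul, pEdai, smul_smul, hsgn2, one_smul]
    · intro x y hx hy; rw [map_mul, map_mul, hx, hy]
    · intro x y hx hy; rw [map_add, map_add, hx, hy]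
  -- P commutes with Ta
  have PTa : ∀ x : U θ, P (Ta x) = Ta (P x) := by
    apply Uind
    · intro r; rw [AlgHom.commutes, AlgHom.commutes, AlgHom.commutes]
    · intro g
      cases g
      · show P (Ta (Kd θ)) = Ta (P (Kd θ)); rw [taKd, pKd, taKd]
      · show P (Ta (Kdi θ)) = Ta (P (Kdi θ)); rw [taKdi, pKdi, taKdi]
      · show P (Ta (Ka θ)) = Ta (P (Ka θ)); rw [taKa, pKai, pKa, taKa]
      · show P (Ta (Kai θ)) = Ta (P (Kai θ)); rw [taKai, pKa, pKai, taKai]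
      · show P (Ta (Kda θ)) = Ta (P (Kda θ)); rw [taKda, map_mul, map_pow, pKda, pKa, taKda]
      · show P (Ta (Kdai θ)) = Ta (P (Kdai θ)); rw [taKdai, map_mul, map_pow, pKdai, pKai, taKdai]
      · show P (Ta (Ea θ)) = Ta (P (Ea θ))
        rw [taEa, pEa, map_smul, taEa, map_neg, map_mul, pEai, pKa, smul_mul_assoc, smul_neg]
      · show P (Ta (Eai θ)) = Ta (P (Eai θ))
        rw [taEai, pEai, map_smul, taEai, map_neg, map_smul, map_mul, pKai, pEa, mul_smul_comm,
          smul_neg, smul_smul]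
      · show P (Ta (Eda θ)) = Ta (P (Eda θ))
        rw [taEda, pEda, map_smul, map_smul, taEda, map_br', Pbr _ _ _ pEa pEda, pEa,
          br_smul_left', smul_smul, smul_smul]
        exact smul_eq _ _ _ (by ring)
      · show P (Ta (Edai θ)) = Ta (P (Edai θ))
        rw [taEdai, pEdai, map_smul, map_smul, taEdai, map_br', Pbr _ _ _ pEdai pEai, pEai,
          br_smul_right', smul_smul, smul_smul]
        exact smul_eq _ _ _ (by ring)
    · intro x y hx hy; rw [map_mul, map_mul, hx, hy, map_mul, map_mul]
    · intro x y hx hy; rw [map_add, map_add, hx, hy, map_add, map_add]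
  -- P commutes with Td
  have PTd : ∀ x : U θ, P (Td x) = Td (P x) := by
    apply Uind
    · intro r; rw [AlgHom.commutes, AlgHom.commutes, AlgHom.commutes]
    · intro g
      cases g
      · show P (Td (Kd θ)) = Td (P (Kd θ)); rw [tdKd, map_mul, pKd, pKdai, tdKd]
      · show P (Td (Kdi θ)) = Td (P (Kdi θ)); rw [tdKdi, map_mul, pKdi, pKda, tdKdi]
      · show P (Td (Ka θ)) = Td (P (Ka θ)); rw [tdKa, map_mul, map_pow, pKa, pKda, tdKa]
      · show P (Td (Kai θ)) = Td (P (Kai θ)); rw [tdKai, map_mul, map_pow, pKai, pKdai, tdKai]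
      · show P (Td (Kda θ)) = Td (P (Kda θ)); rw [tdKda, pKdai, pKda, tdKda]
      · show P (Td (Kdai θ)) = Td (P (Kdai θ)); rw [tdKdai, pKda, pKdai, tdKdai]
      · show P (Td (Ea θ)) = Td (P (Ea θ))
        rw [tdEa, pEa, map_smul, map_smul, tdEa, map_br', Pbr _ _ _ pEda pEa, pEda,
          br_smul_left', smul_smul, smul_smul]
        exact smul_eq _ _ _ (by ring)
      · show P (Td (Eai θ)) = Td (P (Eai θ))
        rw [tdEai, pEai, map_smul, map_smul, tdEai, map_br', Pbr _ _ _ pEai pEdai, pEdai,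
          br_smul_right', smul_smul, smul_smul]
        exact smul_eq _ _ _ (by ring)
      · show P (Td (Eda θ)) = Td (P (Eda θ))
        rw [tdEda, pEda, map_smul, tdEda, map_neg, map_mul, pEdai, pKda, smul_mul_assoc, smul_neg]
      · show P (Td (Edai θ)) = Td (P (Edai θ))
        rw [tdEdai, pEdai, map_smul, tdEdai, map_neg, map_smul, map_mul, pKdai, pEda,
          mul_smul_comm, smul_neg, smul_smul]
    · intro x y hx hy; rw [map_mul, map_mul, hx, hy, map_mul, map_mul]
    · intro x y hx hy; rw [map_add, map_add, hx, hy, map_add, map_add]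
  -- `dag` of the four quadratic brackets
  have PB1 : P (br (sm2 θ) (Ea θ) (Eda θ)) = br (sm2 θ) (Ea θ) (Eda θ) := Pbr _ _ _ pEa pEda
  have PC1 : P (br (s2 θ) (Edai θ) (Eai θ)) = br (s2 θ) (Edai θ) (Eai θ) := Pbr _ _ _ pEdai pEai
  have PB2 : P (br (sm2 θ) (Eda θ) (Ea θ)) = br (sm2 θ) (Eda θ) (Ea θ) := Pbr _ _ _ pEda pEa
  have PC2 : P (br (s2 θ) (Eai θ) (Edai θ)) = br (s2 θ) (Eai θ) (Edai θ) := Pbr _ _ _ pEai pEdai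
  have dB1 : dag (br (sm2 θ) (Ea θ) (Eda θ)) = sgn θ • br (s2 θ) (Edai θ) (Eai θ) := by
    rw [dbr_tt _ _ _ pEa pEda, hσsm2, dEa, dEda, br_smul_left', br_smul_right', smul_smul,
      smul_smul, hsgn2, one_mul]
  have dC1 : dag (br (s2 θ) (Edai θ) (Eai θ)) = sgn θ • br (sm2 θ) (Ea θ) (Eda θ) := by
    rw [dbr_tt _ _ _ pEdai pEai, hσs2, dEai, dEdai]
  have dB2 : dag (br (sm2 θ) (Eda θ) (Ea θ)) = sgn θ • br (s2 θ) (Eai θ) (Edai θ) := by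
    rw [dbr_tt _ _ _ pEda pEa, hσsm2, dEa, dEda, br_smul_left', br_smul_right', smul_smul,
      smul_smul, hsgn2, one_mul]
  have dC2 : dag (br (s2 θ) (Eai θ) (Edai θ)) = sgn θ • br (sm2 θ) (Eda θ) (Ea θ) := by
    rw [dbr_tt _ _ _ pEai pEdai, hσs2, dEai, dEdai]
  -- `Ta` commutation on generators
  have aKd : dag (Ta (Kd θ)) = Ta (dag (Kd θ)) := by rw [taKd, dKd, taKdi]
  have aKdi : dag (Ta (Kdi θ)) = Ta (dag (Kdi θ)) := by rw [taKdi, dKdi, taKd]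
  have aKa : dag (Ta (Ka θ)) = Ta (dag (Ka θ)) := by rw [taKa, dKai, dKa, taKai]
  have aKai : dag (Ta (Kai θ)) = Ta (dag (Kai θ)) := by rw [taKai, dKa, dKai, taKa]
  have aKda : dag (Ta (Kda θ)) = Ta (dag (Kda θ)) := by
    rw [taKda, dKda, taKdai, P00 _ _ pKda pKa2, dsq _ _ pKa dKa, dKda]
    exact ((Kcomm gen.kai gen.kdai trivial trivial).pow_left 2).eq
  have aKdai : dag (Ta (Kdai θ)) = Ta (dag (Kdai θ)) := by
    rw [taKdai, dKdai, taKda, P00 _ _ pKdai pKai2, dsq _ _ pKai dKai, dKdai]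
    exact ((Kcomm gen.ka gen.kda trivial trivial).pow_left 2).eq
  have aEa : dag (Ta (Ea θ)) = Ta (dag (Ea θ)) := by
    rw [taEa, dEa, map_smul, taEai, dneg, Pt0 _ _ pEai pKa, dKa, dEai, smul_neg, smul_smul,
      hsgn2, one_smul]
  have aEai : dag (Ta (Eai θ)) = Ta (dag (Eai θ)) := by
    rw [taEai, dEai, taEa, dneg, dsmul, hσsgn, P0t _ _ pKai pEa, dEa, dKai, smul_mul_assoc,
      smul_smul, hsgn2, one_smul]
  have aEda : dag (Ta (Eda θ)) = Ta (dag (Eda θ)) := by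
    rw [taEda, dEda, map_smul, taEdai, dsmul, hσaai, dbr_t0 _ _ _ pEa PB1, map_one, dB1, dEa,
      br_smul_left', br_smul_right', smul_smul, smul_smul, smul_smul]
    exact smul_eq _ _ _ (by ring)
  have aEdai : dag (Ta (Edai θ)) = Ta (dag (Edai θ)) := by
    rw [taEdai, dEdai, taEda, dsmul, map_mul, hσsgn, hσaai, dbr_0t _ _ _ PC1 pEai, map_one, dC1,
      dEai, br_smul_right', smul_smul]
    exact smul_eq _ _ _ (by linear_combination aa⁻¹ * hsgn2)
  -- `Td` commutation on generators
  have bKd : dag (Td (Kd θ)) = Td (dag (Kd θ)) := by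
    rw [tdKd, dKd, tdKdi, P00 _ _ pKd pKdai, dKdai, dKd]
    exact (Kcomm gen.kda gen.kdi trivial trivial).eq
  have bKdi : dag (Td (Kdi θ)) = Td (dag (Kdi θ)) := by
    rw [tdKdi, dKdi, tdKd, P00 _ _ pKdi pKda, dKda, dKdi]
    exact (Kcomm gen.kdai gen.kd trivial trivial).eq
  have bKa : dag (Td (Ka θ)) = Td (dag (Ka θ)) := by
    rw [tdKa, dKa, tdKai, P00 _ _ pKa pKda2, dsq _ _ pKda dKda, dKa]
    exact ((Kcomm gen.kdai gen.kai trivial trivial).pow_left 2).eq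
  have bKai : dag (Td (Kai θ)) = Td (dag (Kai θ)) := by
    rw [tdKai, dKai, tdKa, P00 _ _ pKai pKdai2, dsq _ _ pKdai dKdai, dKai]
    exact ((Kcomm gen.kda gen.ka trivial trivial).pow_left 2).eq
  have bKda : dag (Td (Kda θ)) = Td (dag (Kda θ)) := by rw [tdKda, dKdai, dKda, tdKdai]
  have bKdai : dag (Td (Kdai θ)) = Td (dag (Kdai θ)) := by rw [tdKdai, dKda, dKdai, tdKda]
  have bEda : dag (Td (Eda θ)) = Td (dag (Eda θ)) := by
    rw [tdEda, dEda, map_smul, tdEdai, dneg, Pt0 _ _ pEdai pKda, dKda, dEdai, smul_neg,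
      smul_smul, hsgn2, one_smul]
  have bEdai : dag (Td (Edai θ)) = Td (dag (Edai θ)) := by
    rw [tdEdai, dEdai, tdEda, dneg, dsmul, hσsgn, P0t _ _ pKdai pEda, dEda, dKdai,
      smul_mul_assoc, smul_smul, hsgn2, one_smul]
  have bEa : dag (Td (Ea θ)) = Td (dag (Ea θ)) := by
    rw [tdEa, dEa, map_smul, tdEai, dsmul, hσaai, dbr_t0 _ _ _ pEda PB2, map_one, dB2, dEda,
      br_smul_left', br_smul_right', smul_smul, smul_smul, smul_smul]
    exact smul_eq _ _ _ (by ring)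
  have bEai : dag (Td (Eai θ)) = Td (dag (Eai θ)) := by
    rw [tdEai, dEai, tdEa, dsmul, map_mul, hσsgn, hσaai, dbr_0t _ _ _ PC2 pEdai, map_one, dC2,
      dEdai, br_smul_right', smul_smul]
    exact smul_eq _ _ _ (by linear_combination aa⁻¹ * hsgn2)
  -- closure properties
  have Hadd : ∀ (T : U θ →ₐ[KK] U θ) (x y : U θ), dag (T x) = T (dag x) → dag (T y) = T (dag y) →
      dag (T (x + y)) = T (dag (x + y)) := by
    intro T x y hx hy; rw [map_add, dadd, hx, hy, dadd, map_add]
  have Hsub : ∀ (T : U θ →ₐ[KK] U θ) (x y : U θ), dag (T x) = T (dag x) → dag (T y) = T (dag y) →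
      dag (T (x - y)) = T (dag (x - y)) := by
    intro T x y hx hy; rw [map_sub, dsub, hx, hy, dsub, map_sub]
  have Hsmul : ∀ (T : U θ →ₐ[KK] U θ) (c : KK) (x : U θ), dag (T x) = T (dag x) →
      dag (T (c • x)) = T (dag (c • x)) := by
    intro T c x hx; rw [map_smul, dsmul, hx, dsmul, map_smul]
  have Hmul : ∀ (T : U θ →ₐ[KK] U θ), (∀ z, P (T z) = T (P z)) → ∀ (p p' : ℕ) (x y : U θ),
      P x = ((-1 : KK) ^ p) • x → P y = ((-1 : KK) ^ p') • y →
      dag (T x) = T (dag x) → dag (T y) = T (dag y) →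
      dag (T (x * y)) = T (dag (x * y)) := by
    intro T hPT p p' x y hx hy hdx hdy
    have hTx : P (T x) = ((-1 : KK) ^ p) • T x := by rw [hPT, hx, map_smul]
    have hTy : P (T y) = ((-1 : KK) ^ p') • T y := by rw [hPT, hy, map_smul]
    rw [map_mul, dmul p p' (T x) (T y) hTx hTy, hdx, hdy, dmul p p' x y hx hy, map_smul, map_mul]
  have Hprod : ∀ (T : U θ →ₐ[KK] U θ), (∀ z, P (T z) = T (P z)) → ∀ x y : U θ,
      dag (T x) = T (dag x) → dag (T (P x)) = T (dag (P x)) →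
      dag (T y) = T (dag y) → dag (T (P y)) = T (dag (P y)) →
      dag (T (x * y)) = T (dag (x * y)) ∧ dag (T (P x * P y)) = T (dag (P x * P y)) :=
    fun T hPT x y h1 h2 h3 h4 =>
      Hprod_general σ P T dag PP hPT dadd dsmul dmul x y h1 h2 h3 h4
  -- the ten generator instances of the strengthened statement
  have SKd : (dag (Ta (Kd θ)) = Ta (dag (Kd θ)) ∧ dag (Td (Kd θ)) = Td (dag (Kd θ))) ∧
      dag (Ta (P (Kd θ))) = Ta (dag (P (Kd θ))) ∧ dag (Td (P (Kd θ))) = Td (dag (P (Kd θ))) := by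
    refine ⟨⟨aKd, bKd⟩, ?_⟩; rw [pKd]; exact ⟨aKd, bKd⟩
  have SKdi : (dag (Ta (Kdi θ)) = Ta (dag (Kdi θ)) ∧ dag (Td (Kdi θ)) = Td (dag (Kdi θ))) ∧
      dag (Ta (P (Kdi θ))) = Ta (dag (P (Kdi θ))) ∧
        dag (Td (P (Kdi θ))) = Td (dag (P (Kdi θ))) := by
    refine ⟨⟨aKdi, bKdi⟩, ?_⟩; rw [pKdi]; exact ⟨aKdi, bKdi⟩
  have SKa : (dag (Ta (Ka θ)) = Ta (dag (Ka θ)) ∧ dag (Td (Ka θ)) = Td (dag (Ka θ))) ∧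
      dag (Ta (P (Ka θ))) = Ta (dag (P (Ka θ))) ∧ dag (Td (P (Ka θ))) = Td (dag (P (Ka θ))) := by
    refine ⟨⟨aKa, bKa⟩, ?_⟩; rw [pKa]; exact ⟨aKa, bKa⟩
  have SKai : (dag (Ta (Kai θ)) = Ta (dag (Kai θ)) ∧ dag (Td (Kai θ)) = Td (dag (Kai θ))) ∧
      dag (Ta (P (Kai θ))) = Ta (dag (P (Kai θ))) ∧
        dag (Td (P (Kai θ))) = Td (dag (P (Kai θ))) := by
    refine ⟨⟨aKai, bKai⟩, ?_⟩; rw [pKai]; exact ⟨aKai, bKai⟩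
  have SKda : (dag (Ta (Kda θ)) = Ta (dag (Kda θ)) ∧ dag (Td (Kda θ)) = Td (dag (Kda θ))) ∧
      dag (Ta (P (Kda θ))) = Ta (dag (P (Kda θ))) ∧
        dag (Td (P (Kda θ))) = Td (dag (P (Kda θ))) := by
    refine ⟨⟨aKda, bKda⟩, ?_⟩; rw [pKda]; exact ⟨aKda, bKda⟩
  have SKdai : (dag (Ta (Kdai θ)) = Ta (dag (Kdai θ)) ∧ dag (Td (Kdai θ)) = Td (dag (Kdai θ))) ∧
      dag (Ta (P (Kdai θ))) = Ta (dag (P (Kdai θ))) ∧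
        dag (Td (P (Kdai θ))) = Td (dag (P (Kdai θ))) := by
    refine ⟨⟨aKdai, bKdai⟩, ?_⟩; rw [pKdai]; exact ⟨aKdai, bKdai⟩
  have SEa : (dag (Ta (Ea θ)) = Ta (dag (Ea θ)) ∧ dag (Td (Ea θ)) = Td (dag (Ea θ))) ∧
      dag (Ta (P (Ea θ))) = Ta (dag (P (Ea θ))) ∧ dag (Td (P (Ea θ))) = Td (dag (P (Ea θ))) := by
    refine ⟨⟨aEa, bEa⟩, ?_⟩; rw [pEa]; exact ⟨Hsmul Ta _ _ aEa, Hsmul Td _ _ bEa⟩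
  have SEai : (dag (Ta (Eai θ)) = Ta (dag (Eai θ)) ∧ dag (Td (Eai θ)) = Td (dag (Eai θ))) ∧
      dag (Ta (P (Eai θ))) = Ta (dag (P (Eai θ))) ∧
        dag (Td (P (Eai θ))) = Td (dag (P (Eai θ))) := by
    refine ⟨⟨aEai, bEai⟩, ?_⟩; rw [pEai]; exact ⟨Hsmul Ta _ _ aEai, Hsmul Td _ _ bEai⟩
  have SEda : (dag (Ta (Eda θ)) = Ta (dag (Eda θ)) ∧ dag (Td (Eda θ)) = Td (dag (Eda θ))) ∧
      dag (Ta (P (Eda θ))) = Ta (dag (P (Eda θ))) ∧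
        dag (Td (P (Eda θ))) = Td (dag (P (Eda θ))) := by
    refine ⟨⟨aEda, bEda⟩, ?_⟩; rw [pEda]; exact ⟨Hsmul Ta _ _ aEda, Hsmul Td _ _ bEda⟩
  have SEdai : (dag (Ta (Edai θ)) = Ta (dag (Edai θ)) ∧ dag (Td (Edai θ)) = Td (dag (Edai θ))) ∧
      dag (Ta (P (Edai θ))) = Ta (dag (P (Edai θ))) ∧
        dag (Td (P (Edai θ))) = Td (dag (P (Edai θ))) := by
    refine ⟨⟨aEdai, bEdai⟩, ?_⟩; rw [pEdai]; exact ⟨Hsmul Ta _ _ aEdai, Hsmul Td _ _ bEdai⟩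
  -- main induction
  have key : ∀ x : U θ,
      (dag (Ta x) = Ta (dag x) ∧ dag (Td x) = Td (dag x)) ∧
        dag (Ta (P x)) = Ta (dag (P x)) ∧ dag (Td (P x)) = Td (dag (P x)) := by
    apply Uind
    · intro r
      have h : ∀ T : U θ →ₐ[KK] U θ,
          dag (T (algebraMap KK (U θ) r)) = T (dag (algebraMap KK (U θ) r)) := by
        intro T; rw [AlgHom.commutes, dalg, AlgHom.commutes]
      refine ⟨⟨h Ta, h Td⟩, ?_⟩
      rw [AlgHom.commutes]
      exact ⟨h Ta, h Td⟩
    · intro g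
      cases g
      exacts [SKd, SKdi, SKa, SKai, SKda, SKdai, SEa, SEai, SEda, SEdai]
    · intro x y hx hy
      refine ⟨⟨(Hprod Ta PTa x y hx.1.1 hx.2.1 hy.1.1 hy.2.1).1,
        (Hprod Td PTd x y hx.1.2 hx.2.2 hy.1.2 hy.2.2).1⟩, ?_⟩
      rw [map_mul]
      exact ⟨(Hprod Ta PTa x y hx.1.1 hx.2.1 hy.1.1 hy.2.1).2,
        (Hprod Td PTd x y hx.1.2 hx.2.2 hy.1.2 hy.2.2).2⟩
    · intro x y hx hy
      refine ⟨⟨Hadd Ta _ _ hx.1.1 hy.1.1, Hadd Td _ _ hx.1.2 hy.1.2⟩, ?_⟩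
      rw [map_add]
      exact ⟨Hadd Ta _ _ hx.2.1 hy.2.1, Hadd Td _ _ hx.2.2 hy.2.2⟩
  intro x
  exact (key x).1
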